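/- Let A ∈ ℝ^{n×n}, B ∈ ℝ^{n×m}, b ∈ ℝⁿ, fix a Kalman controllable decomposition of (A,B) with blocks A₁₁, A₁₂, A₂₂, B₁ and matrices P₁, P₂, assume (A1): there exists c ∈ ℝ^{n−k} with A₂₂ c = P₂ᵀ b, and let f satisfy (A2): f ∈ C²(ℝⁿ×ℝᵐ) with ∇²f ⪰ δ I_{n+m} everywhere for some δ > 0. Then for each x ∈ 𝒳, Problem (O) admits a unique solution, i.e. there is a unique (x*,u*) ∈ 𝒱_x with f(x*,u*) = inf_{(z,u) ∈ 𝒱_x} f(z,u). -/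

import Mathlib

/-!
By (A2), `(z, u) ↦ f z u` is `δ`-strongly convex on `ℝⁿ × ℝᵐ`. The set `𝒱ₓ` is closed and
convex (affine conditions together with membership in the subspace `𝒢₁`), and it is nonempty:
in the coordinates `(P₁, P₂)` the equation `A z + B u + b = 0` splits into a `P₁`-component,
solvable for any prescribed `P₂ᵀ z` by the Kalman rank condition on `(A₁₁, B₁)`, and a
`P₂`-component, which by (A1) reads `A₂₂ (P₂ᵀ z + c) = 0`, i.e. `P₂ᵀ z + c ∈ 𝒢₂`. A continuous
strongly convex function is coercive on a closed convex set, hence attains its infimum there,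
and strict convexity makes the minimizer unique.
-/

open MeasureTheory Matrix Filter

namespace Turnpike

/-- Euclidean norm of a real vector. -/
noncomputable def vnorm {n : ℕ} (x : Fin n → ℝ) : ℝ := Real.sqrt (∑ i, (x i) ^ 2)

/-- Frobenius norm of a real matrix. -/
noncomputable def mnorm {n m : ℕ} (M : Matrix (Fin n) (Fin m) ℝ) : ℝ :=
  Real.sqrt (∑ i, ∑ j, (M i j) ^ 2)

/-- Euclidean norm of a complex vector. -/
noncomputable def cnorm {d : ℕ} (w : Fin d → ℂ) : ℝ := Real.sqrt (∑ i, ‖w i‖ ^ 2)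

/-- The state trajectory `X(t) = e^{tA} x + ∫₀ᵗ e^{(t-s)A} (B u(s) + b) ds`. -/
noncomputable def traj {n m : ℕ} (A : Matrix (Fin n) (Fin n) ℝ) (B : Matrix (Fin n) (Fin m) ℝ)
    (b x : Fin n → ℝ) (u : ℝ → Fin m → ℝ) (t : ℝ) : Fin n → ℝ :=
  (NormedSpace.exp (t • A)).mulVec x +
    ∫ s in (0:ℝ)..t, (NormedSpace.exp ((t - s) • A)).mulVec (B.mulVec (u s) + b)

/-- `u ∈ L²(0,T;ℝᵐ)`. -/
def IsL2 {m : ℕ} (T : ℝ) (u : ℝ → Fin m → ℝ) : Prop :=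
  MemLp u 2 (volume.restrict (Set.Ioc 0 T))

/-- The cost functional `J_T(x;u) = ∫₀ᵀ f(X(t),u(t)) dt`. -/
noncomputable def cost {n m : ℕ} (A : Matrix (Fin n) (Fin n) ℝ) (B : Matrix (Fin n) (Fin m) ℝ)
    (b : Fin n → ℝ) (f : (Fin n → ℝ) → (Fin m → ℝ) → ℝ) (T : ℝ) (x : Fin n → ℝ)
    (u : ℝ → Fin m → ℝ) : ℝ :=
  ∫ t in (0:ℝ)..T, f (traj A B b x u t) (u t)

/-- `u` is an optimal control for Problem (LC)_T with initial state `x`. -/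
def OptimalControl {n m : ℕ} (A : Matrix (Fin n) (Fin n) ℝ) (B : Matrix (Fin n) (Fin m) ℝ)
    (b : Fin n → ℝ) (f : (Fin n → ℝ) → (Fin m → ℝ) → ℝ) (T : ℝ) (x : Fin n → ℝ)
    (u : ℝ → Fin m → ℝ) : Prop :=
  IsL2 T u ∧ ∀ v : ℝ → Fin m → ℝ, IsL2 T v → cost A B b f T x u ≤ cost A B b f T x v

/-- Kalman rank condition for controllability of `(A,B)`. -/
def Controllable {k m : ℕ} (A : Matrix (Fin k) (Fin k) ℝ) (B : Matrix (Fin k) (Fin m) ℝ) : Prop :=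
  ∀ v : Fin k → ℝ, (∀ i : ℕ, i < k → Matrix.vecMul v (A ^ i * B) = 0) → v = 0

/-- Observability of the pair `(A,C)`. -/
def Observable {n : ℕ} (A C : Matrix (Fin n) (Fin n) ℝ) : Prop :=
  ∀ v : Fin n → ℝ, (∀ i : ℕ, i < n → (C * A ^ i).mulVec v = 0) → v = 0

/-- A Kalman controllable decomposition of `(A,B)` given by `P₁, P₂` with `P = (P₁,P₂)`
orthogonal, columns of `P₁` spanning the controllable subspace. -/
structure KalmanDec (n k l m : ℕ) (A : Matrix (Fin n) (Fin n) ℝ) (B : Matrix (Fin n) (Fin m) ℝ)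
    (P₁ : Matrix (Fin n) (Fin k) ℝ) (P₂ : Matrix (Fin n) (Fin l) ℝ) : Prop where
  orth₁ : P₁ᵀ * P₁ = 1
  orth₂ : P₂ᵀ * P₂ = 1
  orth₁₂ : P₁ᵀ * P₂ = 0
  complete : P₁ * P₁ᵀ + P₂ * P₂ᵀ = 1
  lowerZero : P₂ᵀ * A * P₁ = 0
  inputZero : P₂ᵀ * B = 0
  ctrb : Controllable (P₁ᵀ * A * P₁) (P₁ᵀ * B)

/-- `𝒢₁`: real vectors lying in the sum of the generalized eigenspaces of `A₂₂` associated
with eigenvalues of negative real part. -/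
noncomputable def G1 {l : ℕ} (A22 : Matrix (Fin l) (Fin l) ℝ) : Set (Fin l → ℝ) :=
  {y | (fun i => (y i : ℂ)) ∈ Submodule.span ℂ
      {w : Fin l → ℂ | ∃ μ : ℂ, μ.re < 0 ∧
        ((A22.map (Complex.ofReal) - μ • 1) ^ l).mulVec w = 0}}

/-- `𝒢₂ = ker A₂₂`. -/
def G2 {l : ℕ} (A22 : Matrix (Fin l) (Fin l) ℝ) : Set (Fin l → ℝ) := {y | A22.mulVec y = 0}

/-- `w ∈ 𝒢₁ ⊕ 𝒢₂`. -/
def Feas {l : ℕ} (A22 : Matrix (Fin l) (Fin l) ℝ) (w : Fin l → ℝ) : Prop :=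
  ∃ y₁ ∈ G1 A22, ∃ y₂ ∈ G2 A22, w = y₁ + y₂

/-- `IsQ2 A22 w y₂` says `y₂ = Q₂ w`: `y₂ ∈ 𝒢₂` and `w - y₂ ∈ 𝒢₁`
(in particular `w ∈ 𝒢₁ ⊕ 𝒢₂`). -/
def IsQ2 {l : ℕ} (A22 : Matrix (Fin l) (Fin l) ℝ) (w y₂ : Fin l → ℝ) : Prop :=
  y₂ ∈ G2 A22 ∧ w - y₂ ∈ G1 A22

/-- Membership `(z,u) ∈ 𝒱ₓ`. -/
def InV {n m l : ℕ} (A : Matrix (Fin n) (Fin n) ℝ) (B : Matrix (Fin n) (Fin m) ℝ)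
    (b : Fin n → ℝ) (P₂ : Matrix (Fin n) (Fin l) ℝ) (c : Fin l → ℝ) (x : Fin n → ℝ)
    (z : Fin n → ℝ) (u : Fin m → ℝ) : Prop :=
  A.mulVec z + B.mulVec u + b = 0 ∧
  IsQ2 (P₂ᵀ * A * P₂) (P₂ᵀ.mulVec x + c) (P₂ᵀ.mulVec z + c)

/-- Partial gradient `f_x`. -/
noncomputable def gradX {n m : ℕ} (f : (Fin n → ℝ) → (Fin m → ℝ) → ℝ)
    (x : Fin n → ℝ) (u : Fin m → ℝ) : Fin n → ℝ :=
  fun i => deriv (fun s : ℝ => f (x + s • (Pi.single i 1 : Fin n → ℝ)) u) 0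

/-- Partial gradient `f_u`. -/
noncomputable def gradU {n m : ℕ} (f : (Fin n → ℝ) → (Fin m → ℝ) → ℝ)
    (x : Fin n → ℝ) (u : Fin m → ℝ) : Fin m → ℝ :=
  fun j => deriv (fun s : ℝ => f x (u + s • (Pi.single j 1 : Fin m → ℝ))) 0

/-- Full Hessian matrix `∇²f(x,u)` on `ℝⁿ × ℝᵐ`, indexed by `Fin n ⊕ Fin m`. -/
noncomputable def hessMat {n m : ℕ} (f : (Fin n → ℝ) → (Fin m → ℝ) → ℝ)
    (x : Fin n → ℝ) (u : Fin m → ℝ) : Matrix (Fin n ⊕ Fin m) (Fin n ⊕ Fin m) ℝ :=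
  fun i j => deriv (fun s : ℝ => deriv (fun r : ℝ =>
      f (fun a => (Sum.elim x u + s • (Pi.single i 1 : Fin n ⊕ Fin m → ℝ) + r • (Pi.single j 1 : Fin n ⊕ Fin m → ℝ)) (Sum.inl a))
        (fun a => (Sum.elim x u + s • (Pi.single i 1 : Fin n ⊕ Fin m → ℝ) + r • (Pi.single j 1 : Fin n ⊕ Fin m → ℝ)) (Sum.inr a))) 0) 0

/-- Assumption (A2): `f` is `C²` and `∇²f ⪰ δ I` everywhere. -/
def A2Hyp {n m : ℕ} (f : (Fin n → ℝ) → (Fin m → ℝ) → ℝ) (δ : ℝ) : Prop :=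
  ContDiff ℝ 2 (fun p : (Fin n → ℝ) × (Fin m → ℝ) => f p.1 p.2) ∧
  ∀ (x : Fin n → ℝ) (u : Fin m → ℝ),
    (hessMat f x u - δ • (1 : Matrix (Fin n ⊕ Fin m) (Fin n ⊕ Fin m) ℝ)).PosSemidef

/-- Second partial derivative matrix `f_{xu}(x,u) ∈ ℝ^{n×m}`. -/
noncomputable def fxuMat {n m : ℕ} (f : (Fin n → ℝ) → (Fin m → ℝ) → ℝ)
    (x : Fin n → ℝ) (u : Fin m → ℝ) : Matrix (Fin n) (Fin m) ℝ :=
  fun i j => deriv (fun s : ℝ => gradU f (x + s • (Pi.single i 1 : Fin n → ℝ)) u j) 0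

/-- Second partial derivative matrix `f_{uu}(x,u) ∈ ℝ^{m×m}`. -/
noncomputable def fuuMat {n m : ℕ} (f : (Fin n → ℝ) → (Fin m → ℝ) → ℝ)
    (x : Fin n → ℝ) (u : Fin m → ℝ) : Matrix (Fin m) (Fin m) ℝ :=
  fun i j => deriv (fun s : ℝ => gradU f x (u + s • (Pi.single i 1 : Fin m → ℝ)) j) 0

/-- Assumption (A3). -/
def A3Hyp {n m : ℕ} (f : (Fin n → ℝ) → (Fin m → ℝ) → ℝ) : Prop :=
  ∀ r > (0:ℝ), ∃ γ > (0:ℝ), ∀ (x : Fin n → ℝ) (u : Fin m → ℝ), vnorm x ≤ r →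
    mnorm (fxuMat f x u * (fuuMat f x u)⁻¹) ≤ γ

/-- Value function of Problem (LC)_T. -/
noncomputable def VT {n m : ℕ} (A : Matrix (Fin n) (Fin n) ℝ) (B : Matrix (Fin n) (Fin m) ℝ)
    (b : Fin n → ℝ) (f : (Fin n → ℝ) → (Fin m → ℝ) → ℝ) (T : ℝ) (x : Fin n → ℝ) : ℝ :=
  sInf {r | ∃ u : ℝ → Fin m → ℝ, IsL2 T u ∧ r = cost A B b f T x u}

/-- Optimal value of the static Problem (O). -/
noncomputable def Vstar {n m l : ℕ} (A : Matrix (Fin n) (Fin n) ℝ)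
    (B : Matrix (Fin n) (Fin m) ℝ) (b : Fin n → ℝ) (P₂ : Matrix (Fin n) (Fin l) ℝ)
    (c : Fin l → ℝ) (f : (Fin n → ℝ) → (Fin m → ℝ) → ℝ) (x : Fin n → ℝ) : ℝ :=
  sInf {r | ∃ z u, InV A B b P₂ c x z u ∧ r = f z u}

/-- The matrix `Π(s) = ∫₀¹ (1-θ) ∇²f((1-θ)x* + θX(s), (1-θ)u* + θu(s)) dθ`, entrywise. -/
noncomputable def PiMat {n m : ℕ} (f : (Fin n → ℝ) → (Fin m → ℝ) → ℝ)
    (xs : Fin n → ℝ) (us : Fin m → ℝ) (X : ℝ → Fin n → ℝ) (u : ℝ → Fin m → ℝ)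
    (s : ℝ) : Matrix (Fin n ⊕ Fin m) (Fin n ⊕ Fin m) ℝ :=
  fun i j => ∫ θ in (0:ℝ)..1,
    (1 - θ) * hessMat f ((1 - θ) • xs + θ • X s) ((1 - θ) • us + θ • u s) i j

end Turnpike

open Set

section StrongConvexity

variable {E : Type*} [NormedAddCommGroup E] [NormedSpace ℝ E]

theorem ContDiff.deriv_deriv_add_smul_add_smul {F : E → ℝ} (hF : ContDiff ℝ 2 F) (p v w : E) :
    deriv (fun s : ℝ => deriv (fun r : ℝ => F (p + s • v + r • w)) 0) 0 =
      fderiv ℝ (fderiv ℝ F) p v w := by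
  have hline (q u : E) (s : ℝ) : HasDerivAt (fun r : ℝ => q + r • u) u s := by
    simpa using ((hasDerivAt_id s).smul_const u).const_add q
  have hinner (s : ℝ) :
      deriv (fun r : ℝ => F (p + s • v + r • w)) 0 = fderiv ℝ F (p + s • v + (0 : ℝ) • w) w :=
    ((hF.differentiable (by norm_num) _).hasFDerivAt.comp_hasDerivAt 0
      (hline (p + s • v) w 0)).deriv
  have houter : HasDerivAt (fun s : ℝ => fderiv ℝ F (p + s • v))
      (fderiv ℝ (fderiv ℝ F) (p + (0 : ℝ) • v) v) 0 :=
    ((hF.fderiv_right (m := 1) le_rfl).differentiable one_ne_zero _).hasFDerivAt.comp_hasDerivAt 0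
      (hline p v 0)
  have h := houter.clm_apply (hasDerivAt_const 0 w)
  simp only [zero_smul, add_zero, map_zero] at hinner h
  simp_rw [hinner]
  exact h.deriv

theorem strongConvexOn_univ_of_fderiv_fderiv {F : E → ℝ} {m : ℝ} (hF : ContDiff ℝ 2 F)
    (hF₂ : ∀ p w, m * ‖w‖ ^ 2 ≤ fderiv ℝ (fderiv ℝ F) p w w) : StrongConvexOn univ m F := by
  refine ⟨convex_univ, fun x _ y _ a b ha hb hab => ?_⟩
  set v := x - y
  set g : ℝ → ℝ := fun s => F (y + s • v) - m / 2 * ‖v‖ ^ 2 * s ^ 2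
  set g' : ℝ → ℝ := fun s => fderiv ℝ F (y + s • v) v - m * ‖v‖ ^ 2 * s
  have hline (s : ℝ) : HasDerivAt (fun r : ℝ => y + r • v) v s := by
    simpa using ((hasDerivAt_id s).smul_const v).const_add y
  have hg (s : ℝ) : HasDerivAt g (g' s) s := by
    refine ((hF.differentiable (by norm_num) _).hasFDerivAt.comp_hasDerivAt s (hline s)).sub ?_
    exact ((hasDerivAt_pow 2 s).const_mul (m / 2 * ‖v‖ ^ 2)).congr_deriv (by ring)
  have hg' (s : ℝ) :
      HasDerivAt g' (fderiv ℝ (fderiv ℝ F) (y + s • v) v v - m * ‖v‖ ^ 2) s := by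
    have hDF : HasDerivAt (fun r : ℝ => fderiv ℝ F (y + r • v))
        (fderiv ℝ (fderiv ℝ F) (y + s • v) v) s :=
      ((hF.fderiv_right (m := 1) le_rfl).differentiable one_ne_zero _).hasFDerivAt.comp_hasDerivAt
        s (hline s)
    have h := hDF.clm_apply (hasDerivAt_const s v)
    simp only [map_zero, add_zero] at h
    exact h.sub ((hasDerivAt_id s).const_mul (m * ‖v‖ ^ 2) |>.congr_deriv (mul_one _))
  have hconv : ConvexOn ℝ univ g := by
    refine convexOn_of_hasDerivWithinAt2_nonneg convex_univ
      (fun s _ => (hg s).continuousAt.continuousWithinAt) (fun s _ => (hg s).hasDerivWithinAt)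
      (fun s _ => (hg' s).hasDerivWithinAt) fun s _ => ?_
    linarith [hF₂ (y + s • v) v]
  have hseg := hconv.2 (mem_univ 0) (mem_univ 1) hb ha (by linarith)
  obtain rfl : b = 1 - a := by linarith
  have hy : y + a • v = a • x + (1 - a) • y := by simp only [v]; module
  simp only [g, smul_eq_mul, mul_zero, mul_one, zero_add, zero_smul, one_smul, add_zero,
    v, add_sub_cancel, hy] at hseg
  simp only [smul_eq_mul]
  linear_combination hseg

end StrongConvexity

section Minimization

variable {E : Type*} [NormedAddCommGroup E] [NormedSpace ℝ E] [ProperSpace E]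
  {s : Set E} {F : E → ℝ} {m : ℝ}

theorem StrongConvexOn.eventually_le_cocompact (hF : StrongConvexOn s m F) (hm : 0 < m)
    (hFc : ContinuousOn F s) (hs : IsClosed s) {x₀ : E} (hx₀ : x₀ ∈ s) :
    ∀ᶠ x in cocompact E ⊓ 𝓟 s, F x₀ ≤ F x := by
  obtain ⟨M, hM⟩ : BddBelow (F '' (s ∩ Metric.closedBall x₀ 1)) :=
    ((isCompact_closedBall x₀ 1).inter_left hs).bddBelow_image (hFc.mono inter_subset_left)
  have hMx₀ : M ≤ F x₀ := hM ⟨x₀, ⟨hx₀, Metric.mem_closedBall_self zero_le_one⟩, rfl⟩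
  -- With `F ≥ M` on the unit ball around `x₀`, strong convexity along `[x₀, x]` gives
  -- `F x - F x₀ ≥ ‖x - x₀‖ * (m / 2 * (‖x - x₀‖ - 1) - (F x₀ - M))`.
  set R := 1 + 2 * (F x₀ - M) / m
  have hR : 1 ≤ R := le_add_of_nonneg_right (by positivity)
  refine (hasBasis_cocompact.inf_principal s).eventually_iff.2
    ⟨Metric.closedBall x₀ R, isCompact_closedBall x₀ R, ?_⟩
  rintro x ⟨hxR, hxs⟩
  set d := ‖x - x₀‖
  have hRd : R < d := by simpa [dist_eq_norm] using hxR
  have hd : 0 < d := by linarith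
  set t := d⁻¹
  have ht : 0 < t := inv_pos.2 hd
  have ht1 : t ≤ 1 := inv_le_one_of_one_le₀ (by linarith)
  have hy : t • x + (1 - t) • x₀ ∈ s ∩ Metric.closedBall x₀ 1 := by
    refine ⟨hF.1 hxs hx₀ ht.le (by linarith) (by ring), ?_⟩
    have : t • x + (1 - t) • x₀ - x₀ = t • (x - x₀) := by module
    rw [Metric.mem_closedBall, dist_eq_norm, this, norm_smul, Real.norm_of_nonneg ht.le,
      inv_mul_cancel₀ hd.ne']
  have key := (hM ⟨_, hy, rfl⟩).trans (hF.2 hxs hx₀ ht.le (by linarith) (by ring))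
  have hd1 : t * (1 - t) * (m / 2 * d ^ 2) = m / 2 * (d - 1) := by
    simp only [t]; field_simp
  have hRM : m / 2 * (R - 1) = F x₀ - M := by simp only [R]; field_simp; ring
  have hgrow : m / 2 * (R - 1) < m / 2 * (d - 1) := by gcongr
  rw [smul_eq_mul, smul_eq_mul, show ‖x - x₀‖ = d from rfl, hd1] at key
  have : 0 < t * (F x - F x₀) := by linear_combination key + hgrow - hRM
  exact (sub_pos.1 (pos_of_mul_pos_right this ht.le)).le

theorem StrongConvexOn.existsUnique_isMinOn (hF : StrongConvexOn s m F) (hm : 0 < m)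
    (hFc : ContinuousOn F s) (hs : IsClosed s) (hne : s.Nonempty) :
    ∃! p, p ∈ s ∧ IsMinOn F s p := by
  obtain ⟨x₀, hx₀⟩ := hne
  obtain ⟨p, hp, hpmin⟩ := hFc.exists_isMinOn' hs hx₀ (hF.eventually_le_cocompact hm hFc hs hx₀)
  exact ⟨p, ⟨hp, hpmin⟩, fun q ⟨hq, hqmin⟩ =>
    (hF.strictConvexOn hm).eq_of_isMinOn hqmin hpmin hq hp⟩

end Minimization

theorem sq_norm_le_dotProduct_self {ι : Type*} [Fintype ι] (v : ι → ℝ) : ‖v‖ ^ 2 ≤ v ⬝ᵥ v := by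
  have hnonneg : 0 ≤ v ⬝ᵥ v := Finset.sum_nonneg fun i _ => mul_self_nonneg (v i)
  have hv : ‖v‖ ≤ √(v ⬝ᵥ v) := (pi_norm_le_iff_of_nonneg (Real.sqrt_nonneg _)).2 fun i =>
    Real.abs_le_sqrt <| by
      simpa [dotProduct, sq] using Finset.single_le_sum (f := fun j => v j * v j)
        (fun j _ => mul_self_nonneg (v j)) (Finset.mem_univ i)
  calc ‖v‖ ^ 2 ≤ √(v ⬝ᵥ v) ^ 2 := by gcongr
    _ = v ⬝ᵥ v := Real.sq_sqrt hnonneg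

theorem norm_sumArrowLequivProdArrow_le {α β : Type*} [Fintype α] [Fintype β]
    (v : α ⊕ β → ℝ) : ‖LinearEquiv.sumArrowLequivProdArrow α β ℝ ℝ v‖ ≤ ‖v‖ := by
  rw [Prod.norm_def]
  exact max_le ((pi_norm_le_iff_of_nonneg (norm_nonneg v)).2 fun a => norm_le_pi_norm v _)
    ((pi_norm_le_iff_of_nonneg (norm_nonneg v)).2 fun b => norm_le_pi_norm v _)

namespace Turnpike

theorem Controllable.exists_mulVec_add_mulVec_eq {k m : ℕ} {A : Matrix (Fin k) (Fin k) ℝ}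
    {B : Matrix (Fin k) (Fin m) ℝ} (h : Controllable A B) (w : Fin k → ℝ) :
    ∃ z u, A *ᵥ z + B *ᵥ u = w := by
  have hinj : Function.Injective (fromCols A B).vecMul := by
    refine (injective_iff_map_eq_zero (vecMulLinear (fromCols A B))).2 fun v hv => h v ?_
    rw [vecMulLinear_apply, vecMul_fromCols, ← Sum.elim_zero_zero, Sum.elim_eq_iff] at hv
    rintro (_ | i) -
    · simpa using hv.2
    · rw [pow_succ', Matrix.mul_assoc, ← vecMul_vecMul, hv.1, zero_vecMul]
  have hrank : (fromCols A B).rank = k := by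
    simpa using (vecMul_injective_iff.1 hinj).rank_matrix
  have hsurj : LinearMap.range (fromCols A B).mulVecLin = ⊤ :=
    Submodule.eq_top_of_finrank_eq (by rw [← rank, hrank, Module.finrank_fin_fun])
  obtain ⟨p, hp⟩ := LinearMap.range_eq_top.1 hsurj w
  exact ⟨p ∘ Sum.inl, p ∘ Sum.inr, by simpa using hp⟩

section FeasibleSet

variable {n k l m : ℕ} {A : Matrix (Fin n) (Fin n) ℝ} {B : Matrix (Fin n) (Fin m) ℝ}
  {P₁ : Matrix (Fin n) (Fin k) ℝ} {P₂ : Matrix (Fin n) (Fin l) ℝ} {b : Fin n → ℝ}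
  {c : Fin l → ℝ} {x : Fin n → ℝ}

noncomputable def G1Submodule (A22 : Matrix (Fin l) (Fin l) ℝ) : Submodule ℝ (Fin l → ℝ) :=
  ((Submodule.span ℂ {w : Fin l → ℂ | ∃ μ : ℂ, μ.re < 0 ∧
      ((A22.map Complex.ofReal - μ • 1) ^ l) *ᵥ w = 0}).restrictScalars ℝ).comap
    (Complex.ofRealAm.toLinearMap.compLeft (Fin l))

theorem coe_G1Submodule (A22 : Matrix (Fin l) (Fin l) ℝ) :
    (G1Submodule A22 : Set (Fin l → ℝ)) = G1 A22 := rfl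

theorem isClosed_G1 (A22 : Matrix (Fin l) (Fin l) ℝ) : IsClosed (G1 A22) :=
  coe_G1Submodule A22 ▸ (G1Submodule A22).closed_of_finiteDimensional

theorem mem_G2 {A22 : Matrix (Fin l) (Fin l) ℝ} {y : Fin l → ℝ} : y ∈ G2 A22 ↔ A22 *ᵥ y = 0 :=
  Iff.rfl

theorem KalmanDec.eq_zero_of_mulVec_eq_zero (hK : KalmanDec n k l m A B P₁ P₂)
    {r : Fin n → ℝ} (h₁ : P₁ᵀ *ᵥ r = 0) (h₂ : P₂ᵀ *ᵥ r = 0) : r = 0 := by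
  rw [← one_mulVec r, ← hK.complete, add_mulVec, ← mulVec_mulVec, ← mulVec_mulVec, h₁, h₂]
  simp

theorem KalmanDec.exists_steadyState (hK : KalmanDec n k l m A B P₁ P₂)
    (hc : (P₂ᵀ * A * P₂) *ᵥ c = P₂ᵀ *ᵥ b) {y : Fin l → ℝ} (hy : (P₂ᵀ * A * P₂) *ᵥ y = 0) :
    ∃ z u, A *ᵥ z + B *ᵥ u + b = 0 ∧ P₂ᵀ *ᵥ z + c = y := by
  obtain ⟨z₁, u, hzu⟩ := hK.ctrb.exists_mulVec_add_mulVec_eq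
    (-((P₁ᵀ * A * P₂) *ᵥ (y - c) + P₁ᵀ *ᵥ b))
  have hP₂P₁ : P₂ᵀ * P₁ = 0 := by simpa using congrArg transpose hK.orth₁₂
  set z := P₁ *ᵥ z₁ + P₂ *ᵥ (y - c)
  refine ⟨z, u, hK.eq_zero_of_mulVec_eq_zero ?_ ?_, ?_⟩
  · have : P₁ᵀ *ᵥ (A *ᵥ z + B *ᵥ u + b) = ((P₁ᵀ * A * P₁) *ᵥ z₁ + (P₁ᵀ * B) *ᵥ u)
        + ((P₁ᵀ * A * P₂) *ᵥ (y - c) + P₁ᵀ *ᵥ b) := by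
      simp only [z, mulVec_add, mulVec_mulVec, Matrix.mul_assoc]; abel
    rw [this, hzu, neg_add_cancel]
  · have : P₂ᵀ *ᵥ (A *ᵥ z + B *ᵥ u + b) = (P₂ᵀ * A * P₁) *ᵥ z₁ + (P₂ᵀ * A * P₂) *ᵥ y
        - (P₂ᵀ * A * P₂) *ᵥ c + (P₂ᵀ * B) *ᵥ u + P₂ᵀ *ᵥ b := by
      simp only [z, mulVec_add, mulVec_sub, mulVec_mulVec, Matrix.mul_assoc]; abel
    rw [this, hK.lowerZero, hK.inputZero, hy, hc]
    simp
  · rw [mulVec_add, mulVec_mulVec, mulVec_mulVec, hP₂P₁, hK.orth₂]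
    simp

theorem KalmanDec.exists_InV (hK : KalmanDec n k l m A B P₁ P₂)
    (hc : (P₂ᵀ * A * P₂) *ᵥ c = P₂ᵀ *ᵥ b) (hx : Feas (P₂ᵀ * A * P₂) (P₂ᵀ *ᵥ x + c)) :
    ∃ z u, InV A B b P₂ c x z u := by
  obtain ⟨y₁, hy₁, y₂, hy₂, hxy⟩ := hx
  obtain ⟨z, u, hzu, hz⟩ := hK.exists_steadyState hc hy₂
  exact ⟨z, u, hzu, hz ▸ hy₂, by rwa [hz, hxy, add_sub_cancel_right]⟩

theorem convex_InV : Convex ℝ {p : (Fin n → ℝ) × (Fin m → ℝ) | InV A B b P₂ c x p.1 p.2} := by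
  rintro ⟨z, u⟩ ⟨hzu, hz₂, hz₁⟩ ⟨z', u'⟩ ⟨hzu', hz₂', hz₁'⟩ a a' ha ha' haa'
  rw [mem_G2] at hz₂ hz₂'
  have hproj : P₂ᵀ *ᵥ (a • z + a' • z') + c = a • (P₂ᵀ *ᵥ z + c) + a' • (P₂ᵀ *ᵥ z' + c) := by
    rw [mulVec_add, mulVec_smul, mulVec_smul]
    linear_combination (norm := module) -haa' • c
  refine ⟨?_, ?_, ?_⟩
  · simp only [Prod.fst_add, Prod.snd_add, Prod.smul_fst, Prod.smul_snd, mulVec_add, mulVec_smul]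
    linear_combination (norm := module) a • hzu + a' • hzu' - haa' • b
  · simp only [mem_G2, Prod.fst_add, Prod.smul_fst]
    rw [hproj, mulVec_add, mulVec_smul, mulVec_smul, hz₂, hz₂', smul_zero, smul_zero, add_zero]
  · simp only [Prod.fst_add, Prod.smul_fst]
    rw [hproj, ← coe_G1Submodule, SetLike.mem_coe]
    have : P₂ᵀ *ᵥ x + c - (a • (P₂ᵀ *ᵥ z + c) + a' • (P₂ᵀ *ᵥ z' + c)) =
        a • (P₂ᵀ *ᵥ x + c - (P₂ᵀ *ᵥ z + c)) + a' • (P₂ᵀ *ᵥ x + c - (P₂ᵀ *ᵥ z' + c)) := by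
      linear_combination (norm := module) -haa' • (P₂ᵀ *ᵥ x + c)
    rw [this]
    exact add_mem (Submodule.smul_mem _ a hz₁) (Submodule.smul_mem _ a' hz₁')

theorem isClosed_InV : IsClosed {p : (Fin n → ℝ) × (Fin m → ℝ) | InV A B b P₂ c x p.1 p.2} :=
  (isClosed_eq (by fun_prop) continuous_const).inter
    ((isClosed_eq (by fun_prop) continuous_const).inter ((isClosed_G1 _).preimage (by fun_prop)))

end FeasibleSet

section Hessian

variable {n m : ℕ} {f : (Fin n → ℝ) → (Fin m → ℝ) → ℝ}

theorem hessMat_eq_fderiv_fderiv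
    (hf : ContDiff ℝ 2 fun p : (Fin n → ℝ) × (Fin m → ℝ) => f p.1 p.2)
    (x : Fin n → ℝ) (u : Fin m → ℝ) (i j : Fin n ⊕ Fin m) :
    hessMat f x u i j = fderiv ℝ (fderiv ℝ fun p : (Fin n → ℝ) × (Fin m → ℝ) => f p.1 p.2) (x, u)
      (LinearEquiv.sumArrowLequivProdArrow _ _ ℝ ℝ (Pi.single i 1))
      (LinearEquiv.sumArrowLequivProdArrow _ _ ℝ ℝ (Pi.single j 1)) :=
  hf.deriv_deriv_add_smul_add_smul (x, u)
    (LinearEquiv.sumArrowLequivProdArrow _ _ ℝ ℝ (Pi.single i 1))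
    (LinearEquiv.sumArrowLequivProdArrow _ _ ℝ ℝ (Pi.single j 1))

theorem A2Hyp.mul_sq_norm_le_fderiv_fderiv {δ : ℝ} (hA2 : A2Hyp f δ) (hδ : 0 ≤ δ)
    (p w : (Fin n → ℝ) × (Fin m → ℝ)) :
    δ * ‖w‖ ^ 2 ≤ fderiv ℝ (fderiv ℝ fun q : (Fin n → ℝ) × (Fin m → ℝ) => f q.1 q.2) p w w := by
  set e := LinearEquiv.sumArrowLequivProdArrow (Fin n) (Fin m) ℝ ℝ
  set H := fderiv ℝ (fderiv ℝ fun q : (Fin n → ℝ) × (Fin m → ℝ) => f q.1 q.2) p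
  set v := e.symm w
  have hmat : LinearMap.toMatrix₂' ℝ (H.toLinearMap₁₂.compl₁₂ e.toLinearMap e.toLinearMap) =
      hessMat f p.1 p.2 := by
    ext i j
    exact (hessMat_eq_fderiv_fderiv hA2.1 p.1 p.2 i j).symm
  have hHw : H w w = v ⬝ᵥ (hessMat f p.1 p.2 *ᵥ v) := by
    rw [← hmat, ← Matrix.toLinearMap₂'_apply', Matrix.toLinearMap₂'_toMatrix']
    simp [v]
  have hpsd := (hA2.2 p.1 p.2).dotProduct_mulVec_nonneg v
  rw [star_trivial, sub_mulVec, dotProduct_sub, smul_mulVec, one_mulVec, dotProduct_smul,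
    smul_eq_mul, ← hHw, sub_nonneg] at hpsd
  have hnorm : ‖w‖ ^ 2 ≤ v ⬝ᵥ v :=
    calc ‖w‖ ^ 2 = ‖e v‖ ^ 2 := by simp [v]
      _ ≤ ‖v‖ ^ 2 := by gcongr; exact norm_sumArrowLequivProdArrow_le v
      _ ≤ v ⬝ᵥ v := sq_norm_le_dotProduct_self v
  exact (mul_le_mul_of_nonneg_left hnorm hδ).trans hpsd

end Hessian

/-- Unique solvability of the static Problem (O) (Theorem 5.2). -/
theorem static_problem_unique_solvable {n k l m : ℕ} (A : Matrix (Fin n) (Fin n) ℝ)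
    (B : Matrix (Fin n) (Fin m) ℝ) (P₁ : Matrix (Fin n) (Fin k) ℝ)
    (P₂ : Matrix (Fin n) (Fin l) ℝ) (hK : KalmanDec n k l m A B P₁ P₂)
    (b : Fin n → ℝ) (c : Fin l → ℝ) (hc : (P₂ᵀ * A * P₂).mulVec c = P₂ᵀ.mulVec b)
    (f : (Fin n → ℝ) → (Fin m → ℝ) → ℝ) (δ : ℝ) (hδ : 0 < δ) (hA2 : A2Hyp f δ)
    (x : Fin n → ℝ) (hx : Feas (P₂ᵀ * A * P₂) (P₂ᵀ.mulVec x + c)) :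
    ∃! p : (Fin n → ℝ) × (Fin m → ℝ), InV A B b P₂ c x p.1 p.2 ∧
      ∀ (z : Fin n → ℝ) (w : Fin m → ℝ), InV A B b P₂ c x z w → f p.1 p.2 ≤ f z w := by
  set V := {p : (Fin n → ℝ) × (Fin m → ℝ) | InV A B b P₂ c x p.1 p.2}
  have hstrong : StrongConvexOn V δ fun p => f p.1 p.2 :=
    have h := strongConvexOn_univ_of_fderiv_fderiv hA2.1 (hA2.mul_sq_norm_le_fderiv_fderiv hδ.le)
    ⟨convex_InV, fun p _ q _ => h.2 (mem_univ p) (mem_univ q)⟩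
  obtain ⟨z, u, hzu⟩ := hK.exists_InV hc hx
  obtain ⟨p, ⟨hp, hpmin⟩, huniq⟩ := hstrong.existsUnique_isMinOn hδ
    hA2.1.continuous.continuousOn isClosed_InV ⟨(z, u), hzu⟩
  refine ⟨p, ⟨hp, fun z w hzw => isMinOn_iff.1 hpmin (z, w) hzw⟩, fun q ⟨hq, hqmin⟩ => ?_⟩
  exact huniq q ⟨hq, isMinOn_iff.2 fun r hr => hqmin r.1 r.2 hr⟩

end Turnpike
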